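/- Let A be a separable C*-algebra. Suppose for every finite subset {x_1, ..., x_n} ⊆ A and ε > 0, there exists an MF algebra A_1, elements y_1,...,y_n ∈ A_1, and faithful *-representations ρ_1 of A and ρ_2 of A_1 on a common Hilbert space H with max_i ‖ρ_1(x_i) − ρ_2(y_i)‖ ≤ ε. Then A is an MF algebra. -/

import Mathlib

/-!
Fix dense sequences `d` in `A` and `e` in `ℂ`. For the family `d 0, …, d t`, the hypothesis gives
`y` in an MF algebra `A₁` with `‖P(y)‖` close to `‖P(d)‖` for every `*`-polynomial `P`: faithful
representations are isometric, and a `*`-polynomial is uniformly continuous on bounded sets,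
uniformly in the ambient algebra. In `∏ₖ M_{n_k} / ⊕ₖ M_{n_k}` the norm is `limsup_k` of the
coordinate norms, so the `k`-th coordinates of lifts of `y` are matrices at which finitely many
given `‖P‖` are at most `‖P(d)‖ + 1/(t+1)` (for all large `k`) and one chosen `‖P₀‖` is at least
`‖P₀(d)‖ - 1/(t+1)` (for infinitely many `k`). Sending `a ∈ A` at stage `t` to these matrices at
the point of `d 0, …, d t` nearest to `a` gives a `*`-homomorphism modulo null sequences into
`∏ₜ M_{s_t}`, since the polynomials expressing the `*`-homomorphism identities vanish on `A`;
taking `P₀ = var i` at the stages `Nat.pair m i` makes it faithful.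
-/

noncomputable section

open Filter TopologicalSpace

/-- The C*-algebra `M_m(ℂ)` realized as bounded operators on `ℂ^m`. -/
abbrev MatCStar (m : ℕ) := EuclideanSpace ℂ (Fin m) →L[ℂ] EuclideanSpace ℂ (Fin m)

/-- A sequence of matrices lying in `⊕_k M_{n_k}(ℂ)`, i.e. a null sequence. -/
def IsNullSeq {n : ℕ → ℕ} (f : ∀ k, MatCStar (n k)) : Prop :=
  Tendsto (fun k => ‖f k‖) atTop (nhds 0)

/-- `A` is an MF algebra: there is an injective `*`-homomorphism from `A` into
`∏_k M_{n_k}(ℂ) / ⊕_k M_{n_k}(ℂ)` for some sequence of positive integers `(n_k)`.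
Equivalently (choosing a set-theoretic lift of such an embedding), there is a map `Φ` from
`A` to bounded sequences of matrices which is additive, multiplicative, `ℂ`-homogeneous and
star-preserving modulo null sequences, and which maps only `0` to a null sequence. -/
def IsMF (A : Type) [NonUnitalNormedRing A] [StarRing A] [NormedSpace ℂ A] : Prop :=
  ∃ n : ℕ → ℕ, (∀ k, 0 < n k) ∧
    ∃ Φ : A → ∀ k, MatCStar (n k),
      (∀ a, ∃ C : ℝ, ∀ k, ‖Φ a k‖ ≤ C) ∧
      (∀ a b, IsNullSeq (Φ (a + b) - (Φ a + Φ b))) ∧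
      (∀ a b, IsNullSeq (Φ (a * b) - Φ a * Φ b)) ∧
      (∀ (c : ℂ) (a : A), IsNullSeq (Φ (c • a) - c • Φ a)) ∧
      (∀ a, IsNullSeq (Φ (star a) - star (Φ a))) ∧
      (∀ a, IsNullSeq (Φ a) → a = 0)

/-- `CloseReps A A₁ H x y ε` : there are faithful `*`-representations `ρ₁` of `A` and `ρ₂`
of `A₁` on the common Hilbert space `H` with `max_i ‖ρ₁(x_i) − ρ₂(y_i)‖ ≤ ε`. -/
def CloseReps (A A₁ : Type) [NonUnitalCStarAlgebra A] [NonUnitalCStarAlgebra A₁]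
    (H : Type) [NormedAddCommGroup H] [InnerProductSpace ℂ H] [CompleteSpace H]
    {n : ℕ} (x : Fin n → A) (y : Fin n → A₁) (ε : ℝ) : Prop :=
  ∃ (ρ₁ : A →⋆ₙₐ[ℂ] (H →L[ℂ] H)) (ρ₂ : A₁ →⋆ₙₐ[ℂ] (H →L[ℂ] H)),
    Function.Injective ρ₁ ∧ Function.Injective ρ₂ ∧ ∀ i, ‖ρ₁ (x i) - ρ₂ (y i)‖ ≤ ε

open scoped ENNReal Topology

lemma lp.norm_apply_le_norm_infty {E : ℕ → Type*} [∀ k, NormedAddCommGroup (E k)]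
    (f : lp E ∞) (k : ℕ) : ‖f k‖ ≤ ‖f‖ :=
  lp.norm_apply_le_norm ENNReal.top_ne_zero f k

section NullSeqs

variable (E : ℕ → Type*) [∀ k, NonUnitalCStarAlgebra (E k)]

def nullSeqs : Submodule ℂ (lp E ∞) where
  carrier := {f | Tendsto (fun k => ‖f k‖) atTop (𝓝 0)}
  add_mem' {f g} hf hg := squeeze_zero (fun _ => norm_nonneg _)
    (fun k => norm_add_le (f k) (g k)) (by simpa using hf.add hg)
  zero_mem' := by simp
  smul_mem' c f hf := by simpa [norm_smul] using hf.const_mul ‖c‖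

variable {E}

lemma mem_nullSeqs {f : lp E ∞} : f ∈ nullSeqs E ↔ Tendsto (fun k => ‖f k‖) atTop (𝓝 0) :=
  Iff.rfl

instance : IsClosed (nullSeqs E : Set (lp E ∞)) := by
  refine isClosed_of_closure_subset fun f hf => Metric.tendsto_nhds.2 fun ε hε => ?_
  obtain ⟨g, hg, hfg⟩ := Metric.mem_closure_iff.1 hf (ε / 2) (half_pos hε)
  filter_upwards [Metric.tendsto_nhds.1 (mem_nullSeqs.1 hg) (ε / 2) (half_pos hε)] with k hk
  rw [Real.dist_0_eq_abs, abs_norm] at hk ⊢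
  calc ‖f k‖ ≤ ‖g k‖ + ‖f k - g k‖ := norm_le_norm_add_norm_sub' _ _
    _ ≤ ‖g k‖ + dist f g := by
      rw [dist_eq_norm]; gcongr; exact lp.norm_apply_le_norm_infty (f - g) k
    _ < ε := by linarith

lemma mul_mem_nullSeqs_left {g : lp E ∞} (hg : g ∈ nullSeqs E) (f : lp E ∞) :
    f * g ∈ nullSeqs E := by
  refine squeeze_zero (fun _ => norm_nonneg _) (fun k => ?_) (by simpa using hg.const_mul ‖f‖)
  exact (norm_mul_le (f k) (g k)).trans (by gcongr; exact lp.norm_apply_le_norm_infty f k)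

lemma mul_mem_nullSeqs_right {f : lp E ∞} (hf : f ∈ nullSeqs E) (g : lp E ∞) :
    f * g ∈ nullSeqs E := by
  refine squeeze_zero (fun _ => norm_nonneg _) (fun k => ?_) (by simpa using hf.mul_const ‖g‖)
  exact (norm_mul_le (f k) (g k)).trans (by gcongr; exact lp.norm_apply_le_norm_infty g k)

lemma star_mem_nullSeqs {f : lp E ∞} (hf : f ∈ nullSeqs E) : star f ∈ nullSeqs E := by
  simpa [mem_nullSeqs, lp.star_apply] using hf

end NullSeqs

/-- The C*-algebra `∏ₖ E k / ⊕ₖ E k`. -/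
abbrev ProdModSum (E : ℕ → Type*) [∀ k, NonUnitalCStarAlgebra (E k)] : Type _ :=
  lp E ∞ ⧸ nullSeqs E

namespace ProdModSum

variable {E : ℕ → Type*} [∀ k, NonUnitalCStarAlgebra (E k)]

instance : Mul (ProdModSum E) where
  mul := Quotient.map₂' (· * ·) fun f f' hf g g' hg => by
    rw [Submodule.quotientRel_def] at hf hg ⊢
    rw [show f * g - f' * g' = f * (g - g') + (f - f') * g' by noncomm_ring]
    exact add_mem (mul_mem_nullSeqs_left hg f) (mul_mem_nullSeqs_right hf g')

instance : Star (ProdModSum E) where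
  star := Quotient.map' star fun f f' hf => by
    rw [Submodule.quotientRel_def] at hf ⊢
    simpa only [star_sub] using star_mem_nullSeqs hf

lemma mk_mul (f g : lp E ∞) : (Submodule.Quotient.mk (f * g) : ProdModSum E) =
    Submodule.Quotient.mk f * Submodule.Quotient.mk g := rfl

instance : NonUnitalRing (ProdModSum E) :=
  (Submodule.Quotient.mk_surjective _).nonUnitalRing _ rfl (fun _ _ => rfl) mk_mul
    (fun _ => rfl) (fun _ _ => rfl) (fun _ _ => rfl) (fun _ _ => rfl)

instance : NonUnitalNormedRing (ProdModSum E) where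
  dist_eq x y := by rw [dist_eq_norm, neg_add_eq_sub, norm_sub_rev]
  norm_mul_le x y := by
    have key : ∀ ε > 0, ‖x * y‖ ≤ (‖x‖ + ε) * (‖y‖ + ε) := by
      intro ε hε
      obtain ⟨f, rfl, hf⟩ := Submodule.Quotient.norm_mk_lt x hε
      obtain ⟨g, rfl, hg⟩ := Submodule.Quotient.norm_mk_lt y hε
      calc _ ≤ ‖f * g‖ := Submodule.Quotient.norm_mk_le _ (f * g)
        _ ≤ ‖f‖ * ‖g‖ := norm_mul_le f g
        _ ≤ _ := by gcongr
    have hlim : Tendsto (fun ε => (‖x‖ + ε) * (‖y‖ + ε)) (𝓝[>] 0) (𝓝 (‖x‖ * ‖y‖)) := by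
      have hcont : Continuous fun ε : ℝ => (‖x‖ + ε) * (‖y‖ + ε) := by fun_prop
      exact (hcont.tendsto' 0 _ (by simp)).mono_left nhdsWithin_le_nhds
    exact ge_of_tendsto hlim (eventually_nhdsWithin_of_forall key)

instance : StarRing (ProdModSum E) where
  star_involutive := by rintro ⟨f⟩; exact congrArg Submodule.Quotient.mk (star_star f)
  star_mul := by rintro ⟨f⟩ ⟨g⟩; exact congrArg Submodule.Quotient.mk (star_mul f g)
  star_add := by rintro ⟨f⟩ ⟨g⟩; exact congrArg Submodule.Quotient.mk (star_add f g)

instance : SMulCommClass ℂ (ProdModSum E) (ProdModSum E) where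
  smul_comm c := by
    rintro ⟨f⟩ ⟨g⟩; exact congrArg Submodule.Quotient.mk (mul_smul_comm c f g).symm

instance : IsScalarTower ℂ (ProdModSum E) (ProdModSum E) where
  smul_assoc c := by rintro ⟨f⟩ ⟨g⟩; exact congrArg Submodule.Quotient.mk (smul_mul_assoc c f g)

instance : StarModule ℂ (ProdModSum E) where
  star_smul c := by rintro ⟨f⟩; exact congrArg Submodule.Quotient.mk (star_smul c f)

/- The next two lemmas say that the quotient norm of `f` is `limsup ‖f k‖`. -/

lemma norm_mk_le_of_eventually_le {f : lp E ∞} {c : ℝ} (h : ∀ᶠ k in atTop, ‖f k‖ ≤ c) :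
    ‖(Submodule.Quotient.mk f : ProdModSum E)‖ ≤ c := by
  obtain ⟨N, hN⟩ := eventually_atTop.1 h
  have hc : 0 ≤ c := (norm_nonneg _).trans (hN N le_rfl)
  let tail : lp E ∞ :=
    ⟨fun k => if N ≤ k then f k else 0, (lp.memℓp f).mono' fun k => by split_ifs <;> simp⟩
  have htail : f - tail ∈ nullSeqs E := by
    refine tendsto_const_nhds.congr' ?_
    filter_upwards [eventually_ge_atTop N] with k hk
    rw [eq_comm, norm_eq_zero]
    show f k - (if N ≤ k then f k else 0) = 0
    simp [hk]
  calc ‖(Submodule.Quotient.mk f : ProdModSum E)‖ = ‖(Submodule.Quotient.mk tail : ProdModSum E)‖ :=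
        by rw [(Submodule.Quotient.eq _).2 htail]
    _ ≤ ‖tail‖ := Submodule.Quotient.norm_mk_le _ tail
    _ ≤ c := lp.norm_le_of_forall_le hc fun k => by by_cases hk : N ≤ k <;> simp [tail, hk, hN, hc]

lemma eventually_norm_lt_of_norm_mk_lt {f : lp E ∞} {c : ℝ}
    (h : ‖(Submodule.Quotient.mk f : ProdModSum E)‖ < c) : ∀ᶠ k in atTop, ‖f k‖ < c := by
  obtain ⟨g, hgf, hg⟩ := Submodule.Quotient.norm_mk_lt (Submodule.Quotient.mk f : ProdModSum E)
    (sub_pos.2 h)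
  rw [add_sub_cancel] at hg
  have hfg : f - g ∈ nullSeqs E := (Submodule.Quotient.eq _).1 hgf.symm
  filter_upwards [(mem_nullSeqs.1 hfg).eventually (gt_mem_nhds (sub_pos.2 hg))] with k hk
  calc ‖f k‖ ≤ ‖g k‖ + ‖f k - g k‖ := norm_le_norm_add_norm_sub' _ _
    _ < ‖g‖ + (c - ‖g‖) := add_lt_add_of_le_of_lt (lp.norm_apply_le_norm_infty g k) hk
    _ = c := add_sub_cancel _ _

instance : CStarRing (ProdModSum E) where
  norm_mul_self_le := by
    rintro ⟨f⟩
    refine le_of_forall_gt_imp_ge_of_dense fun c hc => ?_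
    have hc₀ : 0 ≤ c := (norm_nonneg _).trans hc.le
    have hf : ‖(Submodule.Quotient.mk f : ProdModSum E)‖ ≤ √c := by
      refine norm_mk_le_of_eventually_le ?_
      filter_upwards [eventually_norm_lt_of_norm_mk_lt (f := star f * f) hc] with k hk
      refine Real.le_sqrt_of_sq_le ?_
      rw [sq, ← CStarRing.norm_star_mul_self]
      exact hk.le
    calc _ ≤ √c * √c := mul_self_le_mul_self (norm_nonneg _) hf
      _ = c := Real.mul_self_sqrt hc₀

instance : NonUnitalCStarAlgebra (ProdModSum E) where

def mk : lp E ∞ →⋆ₙₐ[ℂ] ProdModSum E where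
  toFun := Submodule.Quotient.mk
  map_smul' _ _ := rfl
  map_zero' := rfl
  map_add' _ _ := rfl
  map_mul' _ _ := rfl
  map_star' _ := rfl

end ProdModSum

/-- Noncommutative `*`-polynomials without constant term. -/
inductive StarTerm (ι : Type*) : Type _
  | var : ι → StarTerm ι
  | add : StarTerm ι → StarTerm ι → StarTerm ι
  | mul : StarTerm ι → StarTerm ι → StarTerm ι
  | smul : ℂ → StarTerm ι → StarTerm ι
  | star : StarTerm ι → StarTerm ι

namespace StarTerm

variable {ι κ : Type*}

instance : Add (StarTerm ι) := ⟨add⟩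
instance : Mul (StarTerm ι) := ⟨mul⟩
instance : SMul ℂ (StarTerm ι) := ⟨smul⟩
instance : Star (StarTerm ι) := ⟨star⟩
instance : Sub (StarTerm ι) := ⟨fun P Q => P + (-1 : ℂ) • Q⟩

def rename (f : ι → κ) : StarTerm ι → StarTerm κ
  | var i => var (f i)
  | add P Q => add (P.rename f) (Q.rename f)
  | mul P Q => mul (P.rename f) (Q.rename f)
  | smul c P => smul c (P.rename f)
  | star P => star (P.rename f)

section Eval

variable {B : Type*} [Add B] [Mul B] [SMul ℂ B] [Star B]

def eval (v : ι → B) : StarTerm ι → B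
  | var i => v i
  | add P Q => P.eval v + Q.eval v
  | mul P Q => P.eval v * Q.eval v
  | smul c P => c • P.eval v
  | star P => Star.star (P.eval v)

@[simp] lemma eval_var (v : ι → B) (i : ι) : (var i).eval v = v i := rfl

@[simp] lemma eval_add (v : ι → B) (P Q : StarTerm ι) :
    (P + Q).eval v = P.eval v + Q.eval v := rfl

@[simp] lemma eval_mul (v : ι → B) (P Q : StarTerm ι) :
    (P * Q).eval v = P.eval v * Q.eval v := rfl

@[simp] lemma eval_smul (v : ι → B) (c : ℂ) (P : StarTerm ι) :
    (c • P).eval v = c • P.eval v := rfl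

@[simp] lemma eval_star (v : ι → B) (P : StarTerm ι) :
    (Star.star P).eval v = Star.star (P.eval v) := rfl

lemma eval_rename (v : κ → B) (f : ι → κ) (P : StarTerm ι) :
    (P.rename f).eval v = P.eval (v ∘ f) := by
  induction P <;> simp_all [rename, eval]

end Eval

@[simp] lemma eval_sub {B : Type*} [AddCommGroup B] [Mul B] [Module ℂ B] [Star B] (v : ι → B)
    (P Q : StarTerm ι) : (P - Q).eval v = P.eval v - Q.eval v := by
  show P.eval v + (-1 : ℂ) • Q.eval v = _
  rw [neg_one_smul, sub_eq_add_neg]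

lemma map_eval {B C F : Type*} [NonUnitalNonAssocSemiring B] [Module ℂ B] [Star B]
    [NonUnitalNonAssocSemiring C] [Module ℂ C] [Star C] [FunLike F B C]
    [NonUnitalAlgHomClass F ℂ B C] [StarHomClass F B C] (φ : F) (v : ι → B) (P : StarTerm ι) :
    φ (P.eval v) = P.eval (φ ∘ v) := by
  induction P <;> simp_all [eval, map_star]

lemma eval_lp_apply {E : ℕ → Type*} [∀ k, NonUnitalCStarAlgebra (E k)] (v : ι → lp E ∞)
    (P : StarTerm ι) (k : ℕ) : P.eval v k = P.eval (fun i => v i k) := by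
  induction P with
  | var i => rfl
  | add P Q hP hQ => simp only [eval, lp.coeFn_add, Pi.add_apply, hP, hQ]
  | mul P Q hP hQ => simp only [eval, lp.infty_coeFn_mul, Pi.mul_apply, hP, hQ]
  | smul c P hP => simp only [eval, lp.coeFn_smul, Pi.smul_apply, hP]
  | star P hP => simp only [eval, lp.star_apply, hP]

lemma continuous_eval {B : Type*} [TopologicalSpace B] [Add B] [Mul B] [SMul ℂ B] [Star B]
    [ContinuousAdd B] [ContinuousMul B] [ContinuousConstSMul ℂ B] [ContinuousStar B]
    (P : StarTerm ι) : Continuous fun v : ι → B => P.eval v := by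
  induction P with
  | var i => exact continuous_apply i
  | add P Q hP hQ => exact hP.add hQ
  | mul P Q hP hQ => exact hP.mul hQ
  | smul c P hP => exact hP.const_smul c
  | star P hP => exact hP.star

def normBound (R : ℝ) : StarTerm ι → ℝ
  | var _ => R
  | add P Q => P.normBound R + Q.normBound R
  | mul P Q => P.normBound R * Q.normBound R
  | smul c P => ‖c‖ * P.normBound R
  | star P => P.normBound R

def modulus (R δ : ℝ) : StarTerm ι → ℝ
  | var _ => δ
  | add P Q => P.modulus R δ + Q.modulus R δ
  | mul P Q => P.normBound R * Q.modulus R δ + P.modulus R δ * Q.normBound (R + δ)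
  | smul c P => ‖c‖ * P.modulus R δ
  | star P => P.modulus R δ

section Norm

variable {B : Type*} [NonUnitalNormedRing B] [StarRing B] [NormedStarGroup B] [NormedSpace ℂ B]

lemma norm_eval_le {v : ι → B} {R : ℝ} (hv : ∀ i, ‖v i‖ ≤ R) (P : StarTerm ι) :
    ‖P.eval v‖ ≤ P.normBound R := by
  induction P with
  | var i => exact hv i
  | add P Q hP hQ => exact (norm_add_le _ _).trans (add_le_add hP hQ)
  | mul P Q hP hQ =>
    exact (norm_mul_le _ _).trans (mul_le_mul hP hQ (norm_nonneg _) ((norm_nonneg _).trans hP))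
  | smul c P hP => exact (norm_smul c _).trans_le (mul_le_mul_of_nonneg_left hP (norm_nonneg c))
  | star P hP => exact (norm_star (P.eval v)).trans_le hP

lemma norm_eval_sub_eval_le {u v : ι → B} {R δ : ℝ} (hu : ∀ i, ‖u i‖ ≤ R)
    (huv : ∀ i, ‖u i - v i‖ ≤ δ) (P : StarTerm ι) :
    ‖P.eval u - P.eval v‖ ≤ P.modulus R δ := by
  have hv : ∀ i, ‖v i‖ ≤ R + δ := fun i =>
    (norm_le_norm_add_norm_sub (u i) (v i)).trans (add_le_add (hu i) (huv i))
  induction P with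
  | var i => exact huv i
  | add P Q hP hQ =>
    simp only [eval, modulus]
    rw [show P.eval u + Q.eval u - (P.eval v + Q.eval v)
      = (P.eval u - P.eval v) + (Q.eval u - Q.eval v) by abel]
    exact (norm_add_le _ _).trans (add_le_add hP hQ)
  | mul P Q hP hQ =>
    simp only [eval, modulus]
    rw [show P.eval u * Q.eval u - P.eval v * Q.eval v
      = P.eval u * (Q.eval u - Q.eval v) + (P.eval u - P.eval v) * Q.eval v by noncomm_ring]
    refine (norm_add_le _ _).trans (add_le_add ?_ ?_) <;> refine (norm_mul_le _ _).trans ?_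
    · exact mul_le_mul (norm_eval_le hu P) hQ (norm_nonneg _)
        ((norm_nonneg _).trans (norm_eval_le hu P))
    · exact mul_le_mul hP (norm_eval_le hv Q) (norm_nonneg _) ((norm_nonneg _).trans hP)
  | smul c P hP =>
    simp only [eval, modulus]
    rw [← smul_sub, norm_smul]
    exact mul_le_mul_of_nonneg_left hP (norm_nonneg c)
  | star P hP => simpa only [eval, modulus, ← star_sub, norm_star] using hP

end Norm

lemma continuous_normBound (P : StarTerm ι) : Continuous fun R => P.normBound R := by
  induction P with
  | var i => exact continuous_id
  | add P Q hP hQ => exact hP.add hQ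
  | mul P Q hP hQ => exact hP.mul hQ
  | smul c P hP => exact hP.const_smul ‖c‖
  | star P hP => exact hP

lemma tendsto_modulus (R : ℝ) (P : StarTerm ι) :
    Tendsto (fun δ => P.modulus R δ) (𝓝 0) (𝓝 0) := by
  induction P with
  | var i => exact tendsto_id
  | add P Q hP hQ => simpa [modulus] using hP.add hQ
  | mul P Q hP hQ =>
    have hQ' : Tendsto (fun δ => Q.normBound (R + δ)) (𝓝 0) (𝓝 (Q.normBound R)) :=
      ((continuous_normBound Q).comp (continuous_const_add R)).tendsto' 0 _ (by simp)
    simpa [modulus] using (hQ.const_mul (P.normBound R)).add (hP.mul hQ')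
  | smul c P hP => simpa [modulus] using hP.const_mul ‖c‖
  | star P hP => exact hP

lemma abs_norm_eval_sub_norm_eval_le {A A₁ B : Type*} [NonUnitalCStarAlgebra A]
    [NonUnitalCStarAlgebra A₁] [NonUnitalCStarAlgebra B] {ρ₁ : A →⋆ₙₐ[ℂ] B} {ρ₂ : A₁ →⋆ₙₐ[ℂ] B}
    (hρ₁ : Function.Injective ρ₁) (hρ₂ : Function.Injective ρ₂) {x : ι → A} {y : ι → A₁}
    {R ε : ℝ} (hx : ∀ i, ‖x i‖ ≤ R) (hxy : ∀ i, ‖ρ₁ (x i) - ρ₂ (y i)‖ ≤ ε) (P : StarTerm ι) :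
    |‖P.eval x‖ - ‖P.eval y‖| ≤ P.modulus R ε := by
  rw [← NonUnitalStarAlgHom.norm_map ρ₁ hρ₁, ← NonUnitalStarAlgHom.norm_map ρ₂ hρ₂, map_eval,
    map_eval]
  refine (abs_norm_sub_norm_le _ _).trans (P.norm_eval_sub_eval_le (fun i => ?_) hxy)
  simpa [NonUnitalStarAlgHom.norm_map ρ₁ hρ₁] using hx i

/-- The identities of an asymptotic `*`-homomorphism, as terms vanishing identically; `var 0`
and `var 0 - var 1` control norms and distances. Scalars are restricted to the countable set of
values of `e`. -/
def testTerm (e : ℕ → ℂ) : ℕ → StarTerm (Fin 3)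
  | 0 => var 0
  | 1 => var 0 - var 1
  | 2 => var 0 - (var 1 + var 2)
  | 3 => var 0 - var 1 * var 2
  | 4 => var 0 - Star.star (var 1)
  | j + 5 => var 0 - e j • var 1

end StarTerm

open StarTerm

structure IsAsymptoticEmbedding {A : Type*} [Zero A] [Add A] [Mul A] [SMul ℂ A] [Star A]
    {E : ℕ → Type*} [∀ k, NonUnitalCStarAlgebra (E k)] (Φ : A → ∀ k, E k) : Prop where
  bounded : ∀ a, ∃ C : ℝ, ∀ k, ‖Φ a k‖ ≤ C
  map_add : ∀ a b, Tendsto (fun k => ‖(Φ (a + b) - (Φ a + Φ b)) k‖) atTop (𝓝 0)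
  map_mul : ∀ a b, Tendsto (fun k => ‖(Φ (a * b) - Φ a * Φ b) k‖) atTop (𝓝 0)
  map_smul : ∀ (c : ℂ) a, Tendsto (fun k => ‖(Φ (c • a) - c • Φ a) k‖) atTop (𝓝 0)
  map_star : ∀ a, Tendsto (fun k => ‖(Φ (star a) - star (Φ a)) k‖) atTop (𝓝 0)
  faithful : ∀ a, Tendsto (fun k => ‖Φ a k‖) atTop (𝓝 0) → a = 0

lemma isMF_iff {A : Type} [NonUnitalNormedRing A] [StarRing A] [NormedSpace ℂ A] :
    IsMF A ↔ ∃ n : ℕ → ℕ, (∀ k, 0 < n k) ∧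
      ∃ Φ : A → ∀ k, MatCStar (n k), IsAsymptoticEmbedding Φ :=
  ⟨fun ⟨n, hn, Φ, h₁, h₂, h₃, h₄, h₅, h₆⟩ => ⟨n, hn, Φ, ⟨h₁, h₂, h₃, h₄, h₅, h₆⟩⟩,
    fun ⟨n, hn, Φ, ⟨h₁, h₂, h₃, h₄, h₅, h₆⟩⟩ => ⟨n, hn, Φ, h₁, h₂, h₃, h₄, h₅, h₆⟩⟩

namespace IsAsymptoticEmbedding

theorem of_testTerm {A : Type*} [NonUnitalNormedRing A] [StarRing A] [NormedSpace ℂ A]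
    {E : ℕ → Type*} [∀ k, NonUnitalCStarAlgebra (E k)] {Φ : A → ∀ k, E k}
    {e : ℕ → ℂ} (he : DenseRange e) (hbdd : ∀ a, ∃ C : ℝ, ∀ k, ‖Φ a k‖ ≤ C)
    (htest : ∀ j (a : Fin 3 → A) (ε : ℝ), 0 < ε → ∀ᶠ k in atTop,
      ‖(testTerm e j).eval (fun p => Φ (a p) k)‖ < ‖(testTerm e j).eval a‖ + ε)
    (hfaithful : ∀ a, Tendsto (fun k => ‖Φ a k‖) atTop (𝓝 0) → a = 0) :
    IsAsymptoticEmbedding Φ := by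
  have tendsto_of_lt : ∀ {u : ℕ → ℝ}, (∀ k, 0 ≤ u k) → (∀ ε > 0, ∀ᶠ k in atTop, u k < ε) →
      Tendsto u atTop (𝓝 0) := fun h0 h =>
    tendsto_order.2 ⟨fun c hc => .of_forall fun k => hc.trans_le (h0 k), h⟩
  have htest₀ : ∀ j (a : Fin 3 → A), (testTerm e j).eval a = 0 →
      Tendsto (fun k => ‖(testTerm e j).eval (fun p => Φ (a p) k)‖) atTop (𝓝 0) :=
    fun j a ha => tendsto_of_lt (fun _ => norm_nonneg _) fun ε hε => by
      simpa [ha] using htest j a ε hε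
  refine ⟨hbdd, fun a b => ?_, fun a b => ?_, fun c a => ?_, fun a => ?_, hfaithful⟩
  · simpa [testTerm] using htest₀ 2 ![a + b, a, b] (by simp [testTerm])
  · simpa [testTerm] using htest₀ 3 ![a * b, a, b] (by simp [testTerm])
  · refine tendsto_of_lt (fun _ => norm_nonneg _) fun ε hε => ?_
    obtain ⟨C, hC⟩ := hbdd a
    have hC₀ : 0 ≤ C := (norm_nonneg _).trans (hC 0)
    obtain ⟨j, hj⟩ := Metric.denseRange_iff.1 he c (ε / 2 / (‖a‖ + C + 1)) (by positivity)
    rw [dist_eq_norm, lt_div_iff₀ (by positivity)] at hj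
    filter_upwards [htest (j + 5) ![c • a, a, 0] (ε / 2) (half_pos hε)] with k hk
    simp only [testTerm, eval_sub, eval_smul, eval_var, Matrix.cons_val_zero,
      Matrix.cons_val_one] at hk
    calc ‖(Φ (c • a) - c • Φ a) k‖ = ‖(Φ (c • a) k - e j • Φ a k) + (e j - c) • Φ a k‖ := by
          rw [sub_smul]; congr 1; simp only [Pi.sub_apply, Pi.smul_apply]; abel
      _ ≤ ‖c • a - e j • a‖ + ε / 2 + ‖c - e j‖ * C := by
          refine (norm_add_le _ _).trans (add_le_add hk.le ?_)
          rw [norm_smul, norm_sub_rev]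
          exact mul_le_mul_of_nonneg_left (hC k) (norm_nonneg _)
      _ = ‖c - e j‖ * (‖a‖ + C) + ε / 2 := by rw [← sub_smul, norm_smul]; ring
      _ < ε := by nlinarith [norm_nonneg (c - e j), norm_nonneg a]
  · simpa [testTerm] using htest₀ 4 ![star a, a, 0] (by simp [testTerm])

variable {A : Type*} [NonUnitalCStarAlgebra A] {E : ℕ → Type*} [∀ k, NonUnitalCStarAlgebra (E k)]
  {Φ : A → ∀ k, E k}

def lift (hΦ : IsAsymptoticEmbedding Φ) (a : A) : lp E ∞ :=
  ⟨Φ a, by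
    obtain ⟨C, hC⟩ := hΦ.bounded a
    exact memℓp_infty ⟨C, by rintro - ⟨k, rfl⟩; exact hC k⟩⟩

@[simp] lemma lift_apply (hΦ : IsAsymptoticEmbedding Φ) (a : A) (k : ℕ) : hΦ.lift a k = Φ a k :=
  rfl

def toProdModSum (hΦ : IsAsymptoticEmbedding Φ) : A →⋆ₙₐ[ℂ] ProdModSum E where
  toFun a := ProdModSum.mk (hΦ.lift a)
  map_zero' := (Submodule.Quotient.mk_eq_zero _).2 <| mem_nullSeqs.2 <| by
    simpa using hΦ.map_smul 0 0
  map_add' a b := (Submodule.Quotient.eq _).2 (hΦ.map_add a b)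
  map_mul' a b := (Submodule.Quotient.eq _).2 (hΦ.map_mul a b)
  map_smul' c a := (Submodule.Quotient.eq _).2 (hΦ.map_smul c a)
  map_star' a := (Submodule.Quotient.eq _).2 (hΦ.map_star a)

lemma injective_toProdModSum (hΦ : IsAsymptoticEmbedding Φ) :
    Function.Injective hΦ.toProdModSum :=
  (injective_iff_map_eq_zero _).2 fun a ha =>
    hΦ.faithful a ((Submodule.Quotient.mk_eq_zero _).1 ha)

lemma norm_mk_eval_lift (hΦ : IsAsymptoticEmbedding Φ) {ι : Type*} (y : ι → A)
    (P : StarTerm ι) : ‖ProdModSum.mk (P.eval (hΦ.lift ∘ y))‖ = ‖P.eval y‖ := by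
  rw [map_eval, ← Function.comp_assoc]
  exact (map_eval hΦ.toProdModSum y P).symm ▸
    NonUnitalStarAlgHom.norm_map _ hΦ.injective_toProdModSum _

lemma eventually_norm_eval_lt (hΦ : IsAsymptoticEmbedding Φ) {ι : Type*} (y : ι → A)
    (P : StarTerm ι) {c : ℝ} (hc : ‖P.eval y‖ < c) :
    ∀ᶠ k in atTop, ‖P.eval (fun i => Φ (y i) k)‖ < c := by
  rw [← hΦ.norm_mk_eval_lift] at hc
  simpa only [eval_lp_apply, Function.comp_apply, lift_apply] using
    ProdModSum.eventually_norm_lt_of_norm_mk_lt hc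

lemma frequently_lt_norm_eval (hΦ : IsAsymptoticEmbedding Φ) {ι : Type*} (y : ι → A)
    (P : StarTerm ι) {c : ℝ} (hc : c < ‖P.eval y‖) :
    ∃ᶠ k in atTop, c < ‖P.eval (fun i => Φ (y i) k)‖ := by
  rw [← hΦ.norm_mk_eval_lift] at hc
  refine fun h => hc.not_ge (ProdModSum.norm_mk_le_of_eventually_le ?_)
  simpa only [eval_lp_apply, Function.comp_apply, lift_apply, not_lt] using h

end IsAsymptoticEmbedding

def IsMFApproximable (A : Type) [NonUnitalCStarAlgebra A] : Prop :=
  ∀ (n : ℕ) (x : Fin n → A) (ε : ℝ), 0 < ε →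
    ∃ (A₁ : Type) (i₁ : NonUnitalCStarAlgebra A₁),
      @IsMF A₁ i₁.toNonUnitalNormedRing i₁.toStarRing i₁.toNormedSpace ∧
      ∃ y : Fin n → A₁,
        ∃ (H : Type) (iH : NormedAddCommGroup H)
          (iH₂ : @InnerProductSpace ℂ H Complex.instRCLike iH.toSeminormedAddCommGroup)
          (iH₃ : CompleteSpace H),
          @CloseReps A A₁ _ i₁ H iH iH₂ iH₃ n x y ε

/-- A one-sided form of the matricial characterization of MF algebras. -/
def HasMatricialApproximations (A : Type*) [NonUnitalNormedRing A] [StarRing A]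
    [NormedSpace ℂ A] : Prop :=
  ∀ (n : ℕ) (x : Fin n → A) (T : Set (StarTerm (Fin n))), T.Finite →
    ∀ (P₀ : StarTerm (Fin n)) (δ : ℝ), 0 < δ →
      ∃ s, 0 < s ∧ ∃ V : Fin n → MatCStar s,
        (∀ P ∈ T, ‖P.eval V‖ ≤ ‖P.eval x‖ + δ) ∧ ‖P₀.eval x‖ - δ ≤ ‖P₀.eval V‖

theorem IsMFApproximable.hasMatricialApproximations {A : Type} [NonUnitalCStarAlgebra A]
    (h : IsMFApproximable A) : HasMatricialApproximations A := by
  intro n x T hT P₀ δ hδ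
  obtain ⟨R, hR⟩ : ∃ R, ∀ i, ‖x i‖ ≤ R := Finite.exists_le _
  -- `ε` is fixed before the Hilbert space is, hence the need for moduli uniform in the algebra.
  obtain ⟨ε, ⟨hεT, hε₀⟩, hε⟩ : ∃ ε, ((∀ P ∈ T, P.modulus R ε < δ / 2) ∧
      P₀.modulus R ε < δ / 2) ∧ 0 < ε := by
    have hsmall : ∀ P : StarTerm (Fin n), ∀ᶠ ε in 𝓝 0, P.modulus R ε < δ / 2 := fun P =>
      (P.tendsto_modulus R).eventually (gt_mem_nhds (half_pos hδ))
    exact ((((hT.eventually_all.2 fun P _ => hsmall P).and (hsmall P₀)).filter_mono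
      nhdsWithin_le_nhds).and self_mem_nhdsWithin).exists (f := 𝓝[>] 0)
  obtain ⟨A₁, _, hMF, y, H, _, _, _, ρ₁, ρ₂, hρ₁, hρ₂, hxy⟩ := h n x ε hε
  obtain ⟨s, hs, Φ, hΦ⟩ := isMF_iff.1 hMF
  have hclose := abs_norm_eval_sub_norm_eval_le hρ₁ hρ₂ hR hxy
  obtain ⟨k, hk₀, hkT⟩ :=
    ((hΦ.frequently_lt_norm_eval y P₀ (sub_lt_self _ (half_pos hδ))).and_eventually
      (hT.eventually_all.2 fun P _ =>
        hΦ.eventually_norm_eval_lt y P (lt_add_of_pos_right _ (half_pos hδ)))).exists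
  refine ⟨s k, hs k, fun i => Φ (y i) k, fun P hP => ?_, ?_⟩
  · linarith [hkT P hP, hεT P hP, (abs_le.1 (hclose P)).1]
  · linarith [(abs_le.1 (hclose P₀)).2]

section NearestIndex

variable {X : Type*} [PseudoMetricSpace X]

def nearestIndex (d : ℕ → X) (t : ℕ) (x : X) : Fin (t + 1) :=
  (Finite.exists_min fun j : Fin (t + 1) => dist (d j) x).choose

lemma dist_nearestIndex_le (d : ℕ → X) {t : ℕ} (x : X) (j : Fin (t + 1)) :
    dist (d (nearestIndex d t x)) x ≤ dist (d j) x :=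
  (Finite.exists_min fun j : Fin (t + 1) => dist (d j) x).choose_spec j

lemma tendsto_nearestIndex {d : ℕ → X} (hd : DenseRange d) (x : X) :
    Tendsto (fun t => d (nearestIndex d t x)) atTop (𝓝 x) := by
  refine Metric.tendsto_atTop.2 fun ε hε => ?_
  obtain ⟨j, hj⟩ := Metric.denseRange_iff.1 hd x ε hε
  refine ⟨j, fun t ht => (dist_nearestIndex_le d x ⟨j, Nat.lt_succ_of_le ht⟩).trans_lt ?_⟩
  rwa [dist_comm]

end NearestIndex

structure IsStageApproximation {A : Type*} [NonUnitalNormedRing A] [StarRing A] [NormedSpace ℂ A]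
    (d : ℕ → A) (e : ℕ → ℂ) {s : ℕ → ℕ} (V : ∀ t, Fin (t + 1) → MatCStar (s t)) : Prop where
  norm_eval_le : ∀ t, ∀ j ≤ t, ∀ g : Fin 3 → Fin (t + 1),
    ‖(testTerm e j).eval (fun p => V t (g p))‖ ≤
      ‖(testTerm e j).eval (fun p => d (g p))‖ + 1 / ((t : ℝ) + 1)
  le_norm : ∀ m i, ‖d i‖ - 1 / ((Nat.pair m i : ℝ) + 1) ≤
    ‖V (Nat.pair m i) ⟨i, Nat.lt_succ_of_le (Nat.right_le_pair m i)⟩‖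

theorem HasMatricialApproximations.exists_isStageApproximation {A : Type*}
    [NonUnitalNormedRing A] [StarRing A] [NormedSpace ℂ A] (hA : HasMatricialApproximations A)
    (d : ℕ → A) (e : ℕ → ℂ) :
    ∃ s : ℕ → ℕ, (∀ t, 0 < s t) ∧
      ∃ V : ∀ t, Fin (t + 1) → MatCStar (s t), IsStageApproximation d e V := by
  choose s hs V hV hV₀ using fun t : ℕ => hA (t + 1) (fun i => d i)
    (Set.range fun jg : Fin (t + 1) × (Fin 3 → Fin (t + 1)) => (testTerm e jg.1).rename jg.2)
    (Set.finite_range _) (var ⟨(Nat.unpair t).2, Nat.lt_succ_of_le (Nat.unpair_right_le t)⟩)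
    (1 / ((t : ℝ) + 1)) Nat.one_div_pos_of_nat
  refine ⟨s, hs, V, fun t j hj g => ?_, fun m i => ?_⟩
  · simpa [eval_rename, Function.comp_def] using hV t _ ⟨(⟨j, Nat.lt_succ_of_le hj⟩, g), rfl⟩
  · have h := hV₀ (Nat.pair m i)
    have hi : (⟨(Nat.unpair (Nat.pair m i)).2, Nat.lt_succ_of_le (Nat.unpair_right_le _)⟩ :
        Fin (Nat.pair m i + 1)) = ⟨i, Nat.lt_succ_of_le (Nat.right_le_pair m i)⟩ :=
      Fin.ext (by simp)
    rw [hi] at h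
    simpa using h

namespace IsStageApproximation

variable {A : Type*} [NonUnitalNormedRing A] [StarRing A] [NormedSpace ℂ A]
  {d : ℕ → A} {e : ℕ → ℂ} {s : ℕ → ℕ} {V : ∀ t, Fin (t + 1) → MatCStar (s t)}

lemma norm_le (hV : IsStageApproximation d e V) (a : A) (t : ℕ) :
    ‖V t (nearestIndex d t a)‖ ≤ ‖a‖ + dist (d 0) a + 1 := by
  have h := hV.norm_eval_le t 0 (Nat.zero_le t) fun _ => nearestIndex d t a
  simp only [testTerm, eval_var] at h
  have hd : ‖d (nearestIndex d t a)‖ ≤ ‖a‖ + dist (d 0) a := by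
    refine (norm_le_norm_add_norm_sub' _ a).trans (add_le_add le_rfl ?_)
    simpa [dist_eq_norm] using dist_nearestIndex_le d a 0
  have hδ : 1 / ((t : ℝ) + 1) ≤ 1 := (div_le_one (by positivity)).2 (by simp)
  linarith

lemma eventually_norm_eval_lt [NormedStarGroup A] (hV : IsStageApproximation d e V)
    (hd : DenseRange d) (j : ℕ)
    (a : Fin 3 → A) {ε : ℝ} (hε : 0 < ε) :
    ∀ᶠ t in atTop, ‖(testTerm e j).eval (fun p => V t (nearestIndex d t (a p)))‖ <
      ‖(testTerm e j).eval a‖ + ε := by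
  have hlim : Tendsto (fun t : ℕ => ‖(testTerm e j).eval (fun p => d (nearestIndex d t (a p)))‖ +
      1 / ((t : ℝ) + 1)) atTop (𝓝 (‖(testTerm e j).eval a‖ + 0)) :=
    (((continuous_eval _).tendsto a).comp
      (tendsto_pi_nhds.2 fun p => tendsto_nearestIndex hd (a p))).norm.add
      tendsto_one_div_add_atTop_nhds_zero_nat
  filter_upwards [eventually_ge_atTop j,
    hlim.eventually (gt_mem_nhds ((add_lt_add_iff_left _).2 hε))] with t hjt ht
  exact (hV.norm_eval_le t j hjt _).trans_lt ht

lemma eq_zero_of_tendsto (hV : IsStageApproximation d e V) (hd : DenseRange d) {a : A}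
    (ha : Tendsto (fun t => ‖V t (nearestIndex d t a)‖) atTop (𝓝 0)) : a = 0 := by
  have key : ∀ i, ‖d i‖ ≤ ‖d i - a‖ := by
    intro i
    have hpair : Tendsto (fun m => Nat.pair m i) atTop atTop :=
      tendsto_atTop_mono (fun m => Nat.left_le_pair m i) tendsto_id
    have hlim : Tendsto (fun m => ‖V (Nat.pair m i) (nearestIndex d (Nat.pair m i) a)‖ +
        ‖d i - d (nearestIndex d (Nat.pair m i) a)‖ + 2 * (1 / ((Nat.pair m i : ℝ) + 1)))
        atTop (𝓝 (0 + ‖d i - a‖ + 2 * 0)) :=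
      ((ha.comp hpair).add (((tendsto_nearestIndex hd a).comp hpair).const_sub (d i)).norm).add
        ((tendsto_one_div_add_atTop_nhds_zero_nat.comp hpair).const_mul 2)
    refine ge_of_tendsto (by simpa using hlim) ?_
    filter_upwards [eventually_ge_atTop 1] with m hm
    have h₁ := hV.le_norm m i
    have h₂ := hV.norm_eval_le _ 1 (hm.trans (Nat.left_le_pair m i))
      ![⟨i, Nat.lt_succ_of_le (Nat.right_le_pair m i)⟩, nearestIndex d _ a, nearestIndex d _ a]
    simp only [testTerm, eval_sub, eval_var, Matrix.cons_val_zero, Matrix.cons_val_one] at h₂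
    have h₃ := norm_le_norm_add_norm_sub'
      (V _ ⟨i, Nat.lt_succ_of_le (Nat.right_le_pair m i)⟩) (V _ (nearestIndex d (Nat.pair m i) a))
    rw [one_div] at h₁ h₂
    linarith
  have ha : ‖a‖ ≤ ‖a - a‖ := hd.induction_on (p := fun x => ‖x‖ ≤ ‖x - a‖) a
    (isClosed_le continuous_norm (continuous_id.sub continuous_const).norm) key
  simpa using ha

lemma isAsymptoticEmbedding [NormedStarGroup A] (hV : IsStageApproximation d e V)
    (hd : DenseRange d) (he : DenseRange e) :
    IsAsymptoticEmbedding fun a t => V t (nearestIndex d t a) :=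
  .of_testTerm he (fun a => ⟨_, hV.norm_le a⟩)
    (fun j a _ hε => hV.eventually_norm_eval_lt hd j a hε) (fun _ ha => hV.eq_zero_of_tendsto hd ha)

end IsStageApproximation

theorem HasMatricialApproximations.isMF {A : Type} [NonUnitalNormedRing A] [StarRing A]
    [NormedStarGroup A] [NormedSpace ℂ A] [SeparableSpace A] (hA : HasMatricialApproximations A) :
    IsMF A := by
  obtain ⟨s, hs, V, hV⟩ := hA.exists_isStageApproximation (denseSeq A) (denseSeq ℂ)
  exact isMF_iff.2
    ⟨s, hs, _, hV.isAsymptoticEmbedding (denseRange_denseSeq A) (denseRange_denseSeq ℂ)⟩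

/-- If every finite subset of the separable C*-algebra `A` can, within any `ε > 0` and with
respect to faithful representations on a common Hilbert space, be approximated by elements
of some MF algebra, then `A` itself is an MF algebra. -/
theorem isMF_of_approximation_by_MF_algebras
    (A : Type) [NonUnitalCStarAlgebra A] [SeparableSpace A]
    (h : ∀ (n : ℕ) (x : Fin n → A) (ε : ℝ), 0 < ε →
      ∃ (A₁ : Type) (i₁ : NonUnitalCStarAlgebra A₁),
        @IsMF A₁ i₁.toNonUnitalNormedRing i₁.toStarRing i₁.toNormedSpace ∧
        ∃ y : Fin n → A₁,
          ∃ (H : Type) (iH : NormedAddCommGroup H)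
            (iH₂ : @InnerProductSpace ℂ H Complex.instRCLike
              iH.toSeminormedAddCommGroup)
            (iH₃ : CompleteSpace H),
            @CloseReps A A₁ _ i₁ H iH iH₂ iH₃ n x y ε) :
    IsMF A := by
  have hmat : HasMatricialApproximations A := IsMFApproximable.hasMatricialApproximations h
  exact hmat.isMF
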